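/- Let k be a field, let C = k[y_1, …, y_m] be a commutative polynomial ring, let L be an ideal of C, and let f ∈ C. Let k(t) be the field of rational functions in one variable t over k, let C' = k(t)[y_1, …, y_m], and let ι : C → C' be the canonical inclusion. Then the image of f in C/L is algebraic over k (i.e., there exists a nonzero polynomial q ∈ k[x] with q(f) ∈ L) if and only if 1 lies in the ideal of C' generated by ι(L) together with the element t − ι(f). -/

import Mathlib

/-!
If `q(f) ∈ L` with `q ≠ 0`, then modulo `(L, t - f)` we get `q(t) ≡ q(f) ≡ 0`, while `q(t)` is a
unit of `k(t)`. Conversely, if `f` is transcendental modulo `L`, invert every `q(f)` with `q ≠ 0`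
in `C/L`: the localization is a nonzero ring into which `k(t)` maps by `t ↦ f`, so `C'` maps to it
with `L` and `t - f` in the kernel.
-/

open Polynomial

section Transcendental

variable (k : Type*) {A : Type*} [Field k] [CommRing A] [Algebra k A]

noncomputable abbrev valuesAtNonzero (a : A) : Submonoid A :=
  (nonZeroDivisors k[X]).map (aeval a)

variable {k} in
theorem zero_notMem_valuesAtNonzero {a : A} (ha : Transcendental k a) :
    (0 : A) ∉ valuesAtNonzero k a := by
  rintro ⟨q, hq, hqa⟩
  exact nonZeroDivisors.coe_ne_zero ⟨q, hq⟩
    (transcendental_iff_injective.mp ha (by simpa using hqa))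

noncomputable def RatFunc.aevalLocalization (a : A) :
    RatFunc k →ₐ[k] Localization (valuesAtNonzero k a) :=
  IsLocalization.liftAlgHom (M := nonZeroDivisors k[X])
    (f := (IsScalarTower.toAlgHom k A _).comp (aeval a))
    fun q ↦ IsLocalization.map_units (M := valuesAtNonzero k a) _ ⟨_, q.1, q.2, rfl⟩

theorem RatFunc.aevalLocalization_X (a : A) :
    RatFunc.aevalLocalization k a RatFunc.X = algebraMap A _ a := by
  rw [← RatFunc.algebraMap_X]
  exact (IsLocalization.lift_eq _ _).trans (by simp)

end Transcendental

theorem isAlgebraic_quotient_mk_iff {k B : Type*} [Field k] [CommRing B] [Algebra k B]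
    {L : Ideal B} {b : B} :
    IsAlgebraic k (Ideal.Quotient.mk L b) ↔ ∃ q : k[X], q ≠ 0 ∧ aeval b q ∈ L := by
  have (q : k[X]) : aeval (Ideal.Quotient.mk L b) q = Ideal.Quotient.mk L (aeval b q) := by
    rw [← Ideal.Quotient.mkₐ_eq_mk k, aeval_algHom_apply]
  simp only [IsAlgebraic, this, Ideal.Quotient.eq_zero_iff_mem]

theorem MvPolynomial.eval₂_map_algebraMap {k R K σ : Type*} [CommSemiring k] [CommSemiring R]
    [CommSemiring K] [Algebra k R] [Algebra k K] (χ : R →ₐ[k] K) (ψ : MvPolynomial σ k →ₐ[k] K)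
    (p : MvPolynomial σ k) : eval₂ (χ : R →+* K) (ψ ∘ X) (map (algebraMap k R) p) = ψ p := by
  rw [eval₂_map, χ.comp_algebraMap]
  conv_rhs => rw [aeval_unique ψ]
  rfl

section GraphIdeal

variable {k σ : Type*} [Field k] (L : Ideal (MvPolynomial σ k)) (f : MvPolynomial σ k)

theorem one_mem_span_of_aeval_mem {q : k[X]} (hq : q ≠ 0) (hqL : aeval f q ∈ L) :
    (1 : MvPolynomial σ (RatFunc k)) ∈
      Ideal.span (MvPolynomial.map (algebraMap k (RatFunc k)) '' L ∪
        {MvPolynomial.C RatFunc.X - MvPolynomial.map (algebraMap k (RatFunc k)) f}) := by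
  set J := Ideal.span (MvPolynomial.map (algebraMap k (RatFunc k)) '' L ∪
    {MvPolynomial.C RatFunc.X - MvPolynomial.map (algebraMap k (RatFunc k)) f})
  let ι : MvPolynomial σ k →ₐ[k] MvPolynomial σ (RatFunc k) :=
    MvPolynomial.mapAlgHom (Algebra.ofId k _)
  let π := Ideal.Quotient.mkₐ k J
  have ht : π (MvPolynomial.C RatFunc.X) = π (ι f) :=
    Ideal.Quotient.eq.mpr (Ideal.subset_span (Or.inr rfl))
  have hqf : π (ι (aeval f q)) = 0 :=
    Ideal.Quotient.eq_zero_iff_mem.mpr (Ideal.subset_span (Or.inl ⟨_, hqL, rfl⟩))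
  have hqt : MvPolynomial.C (aeval RatFunc.X q) ∈ J := by
    rw [← Ideal.Quotient.eq_zero_iff_mem, ← Ideal.Quotient.mkₐ_eq_mk k]
    calc π (MvPolynomial.C (aeval RatFunc.X q))
        = aeval (π (MvPolynomial.C RatFunc.X)) q :=
          (aeval_algHom_apply (π.comp (IsScalarTower.toAlgHom k (RatFunc k) _)) _ q).symm
      _ = π (ι (aeval f q)) := by rw [ht, aeval_algHom_apply, aeval_algHom_apply]
      _ = 0 := hqf
  have hunit : IsUnit (MvPolynomial.C (σ := σ) (aeval RatFunc.X q)) :=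
    (isUnit_iff_ne_zero.mpr fun h ↦ hq (transcendental_iff.mp RatFunc.transcendental_X q h)).map _
  rw [Ideal.eq_top_of_isUnit_mem J hqt hunit]
  exact Submodule.mem_top

theorem one_notMem_span_of_transcendental (hf : Transcendental k (Ideal.Quotient.mk L f)) :
    (1 : MvPolynomial σ (RatFunc k)) ∉
      Ideal.span (MvPolynomial.map (algebraMap k (RatFunc k)) '' L ∪
        {MvPolynomial.C RatFunc.X - MvPolynomial.map (algebraMap k (RatFunc k)) f}) := by
  set a := Ideal.Quotient.mk L f
  let K := Localization (valuesAtNonzero k a)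
  have : Nontrivial K :=
    (IsLocalization.toLocalizationMap _ K).nontrivial (zero_notMem_valuesAtNonzero hf)
  let ψ : MvPolynomial σ k →ₐ[k] K := (IsScalarTower.toAlgHom k _ K).comp (Ideal.Quotient.mkₐ k L)
  let χ := RatFunc.aevalLocalization k a
  let Φ := MvPolynomial.eval₂Hom (χ : RatFunc k →+* K) (ψ ∘ MvPolynomial.X)
  have hΦ (p : MvPolynomial σ k) : Φ (MvPolynomial.map (algebraMap k _) p) = ψ p :=
    MvPolynomial.eval₂_map_algebraMap χ ψ p
  intro h1
  refine RingHom.ker_ne_top Φ ((Ideal.eq_top_iff_one _).mpr (Ideal.span_le.mpr ?_ h1))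
  rintro _ (⟨l, hl, rfl⟩ | rfl)
  · rw [SetLike.mem_coe, RingHom.mem_ker, hΦ]
    simp [ψ, Ideal.Quotient.eq_zero_iff_mem.mpr hl]
  · rw [SetLike.mem_coe, RingHom.mem_ker, map_sub, hΦ, sub_eq_zero]
    exact (MvPolynomial.eval₂Hom_C _ _ _).trans (RatFunc.aevalLocalization_X k a)

end GraphIdeal

/-- Subring-membership style test for algebraicity: for C = k[y_1,…,y_m], an ideal L of C and
f ∈ C, the image of f in C/L is algebraic over k (there is a nonzero q ∈ k[x] with q(f) ∈ L)
iff 1 lies in the ideal of C' = k(t)[y_1,…,y_m] generated by the image of L together with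
t − f. -/
theorem algebraic_mod_ideal_iff_one_mem_span
    (k : Type*) [Field k] (m : ℕ) (L : Ideal (MvPolynomial (Fin m) k))
    (f : MvPolynomial (Fin m) k) :
    (∃ q : Polynomial k, q ≠ 0 ∧ Polynomial.aeval f q ∈ L) ↔
      (1 : MvPolynomial (Fin m) (RatFunc k)) ∈
        Ideal.span
          ((MvPolynomial.map (algebraMap k (RatFunc k))) '' (L : Set (MvPolynomial (Fin m) k)) ∪
            {MvPolynomial.C RatFunc.X - MvPolynomial.map (algebraMap k (RatFunc k)) f}) := by
  refine ⟨fun ⟨q, hq, hqL⟩ ↦ one_mem_span_of_aeval_mem L f hq hqL, fun h ↦ ?_⟩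
  have hf : IsAlgebraic k (Ideal.Quotient.mk L f) :=
    not_not.mp fun hf ↦ one_notMem_span_of_transcendental L f hf h
  exact isAlgebraic_quotient_mk_iff.mp hf
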